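/- arXiv:2406.19993 — 9 statements merged into one kernel-verified Lean document; each statement's English description precedes it below -/
import Mathlib

section
/- Let g ≥ 3 and r ≥ 1 be integers. There exists an integer d such that the triple (g,r,d) is expected maximal if and only if r ≤ ⌊√g⌋ in case g ≥ ⌊√g⌋² + ⌊√g⌋, and r ≤ ⌊√g⌋ − 1 in case g < ⌊√g⌋² + ⌊√g⌋. -/
/-- The Brill–Noether number `ρ(g,r,d) = g − (r+1)(g−d+r)`. -/
def rho (g r d : ℤ) : ℤ := g - (r + 1) * (g - d + r)

/-- `(g,r,d)` is expected maximal. -/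
def ExpectedMaximal (g r d : ℤ) : Prop :=
  1 ≤ r ∧ 2 ≤ d ∧ d ≤ g - 1 ∧ rho g r d < 0 ∧ 0 ≤ rho g r (d + 1) ∧
    (2 ≤ r → 0 ≤ rho g (r - 1) (d - 1))

lemma sqrt_le_int (g : ℤ) (hg : 0 ≤ g) : Int.sqrt g * Int.sqrt g ≤ g := by
  have h := Nat.sqrt_le' g.toNat
  have h2 : ((Nat.sqrt g.toNat : ℤ)) * (Nat.sqrt g.toNat : ℤ) ≤ (g.toNat : ℤ) := by
    have := h; rw [pow_two] at this; exact_mod_cast this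
  rw [Int.toNat_of_nonneg hg] at h2
  simpa [Int.sqrt] using h2

lemma lt_succ_sqrt_int (g : ℤ) (hg : 0 ≤ g) :
    g < (Int.sqrt g + 1) * (Int.sqrt g + 1) := by
  have h := Nat.lt_succ_sqrt' g.toNat
  have h2 : (g.toNat : ℤ) < ((Nat.sqrt g.toNat : ℤ) + 1) * ((Nat.sqrt g.toNat : ℤ) + 1) := by
    have := h; rw [Nat.succ_eq_add_one, pow_two] at this; exact_mod_cast this
  rw [Int.toNat_of_nonneg hg] at h2
  simpa [Int.sqrt] using h2

lemma exists_iff (g r : ℤ) (hg : 3 ≤ g) (hr : 1 ≤ r) :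
    (∃ d : ℤ, ExpectedMaximal g r d) ↔ r * (r + 1) ≤ g := by
  constructor
  · rintro ⟨d, _, hd2, hdg, hρ, hρ', _⟩
    simp only [rho] at hρ hρ'
    nlinarith [hρ, hρ', hdg, hr]
  · intro h
    set q := g / (r + 1) with hq
    have hrpos : (0 : ℤ) < r + 1 := by linarith
    have hq1 : (r + 1) * q ≤ g := by
      have h2 := Int.mul_ediv_add_emod g (r + 1)
      have h3 := Int.emod_nonneg g hrpos.ne'
      linarith
    have hq2 : g < (r + 1) * (q + 1) := by
      have h1 := Int.emod_lt_of_pos g hrpos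
      have h2 := Int.mul_ediv_add_emod g (r + 1)
      linarith
    have hrq : r ≤ q := by
      rw [hq, Int.le_ediv_iff_mul_le hrpos]
      linarith [h]
    refine ⟨g + r - 1 - q, hr, ?_, ?_, ?_, ?_, ?_⟩
    · -- 2 ≤ d
      have h2q : 2 * q ≤ g := by nlinarith
      linarith
    · linarith
    · simp only [rho]; nlinarith
    · simp only [rho]; nlinarith
    · intro _
      simp only [rho]
      nlinarith

/-- For `g ≥ 3`, `r ≥ 1`, there exists `d` making `(g,r,d)` expected maximal iff
`r ≤ ⌊√g⌋` when `g ≥ ⌊√g⌋² + ⌊√g⌋` and `r ≤ ⌊√g⌋ − 1` otherwise. -/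
theorem stmt2 (g r : ℤ) (hg : 3 ≤ g) (hr : 1 ≤ r) :
    (∃ d : ℤ, ExpectedMaximal g r d) ↔
      (if Int.sqrt g ^ 2 + Int.sqrt g ≤ g then r ≤ Int.sqrt g
       else r ≤ Int.sqrt g - 1) := by
  rw [exists_iff g r hg hr]
  set s := Int.sqrt g with hs
  have hg0 : (0 : ℤ) ≤ g := by linarith
  have hs0 : 0 ≤ s := Int.sqrt_nonneg g
  have h1 : s * s ≤ g := sqrt_le_int g hg0
  have h2 : g < (s + 1) * (s + 1) := lt_succ_sqrt_int g hg0
  split_ifs with h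
  · constructor
    · intro hle; nlinarith
    · intro hle; nlinarith
  · push_neg at h
    constructor
    · intro hle; nlinarith
    · intro hle; nlinarith
end

section
/- Let g, r, d, r', d' be integers with g ≥ 3, r ≥ 1, 2 ≤ d ≤ g−1, r' ≥ 1, 2 ≤ d' ≤ g−1. Assume: if r' ≤ r then r'·(d−r+r'−d') > r−r', and if r < r' then (r'−r+1)·(g+r'−1−d') > g+r−d−1. Then there exist no non-negative integers r₁, r₂, d₁, d₂ satisfying all of: r₁+r₂ = r'−1; d₁+d₂ ≤ d'−d+2r−2; 0 ≤ ρ(r,r₁,d₁) < r; and 0 ≤ ρ(g+r−d−1,r₂,d₂) < g+r−d−1. -/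
/-- Key combinatorial lemma: a convexity argument for the quadratic
`j ↦ (k+m-j)*r + j*b - j*(k+m-j)*X`. -/
lemma key_aux (r b X k m A B K : ℤ) (hk : 1 ≤ k) (hm : 1 ≤ m)
    (hA : 1 ≤ A) (hB : 1 ≤ B) (hkA : k * A ≤ r) (hmB : m * B ≤ b)
    (hAB : X ≤ A + B) (hkK : k ≤ K) (hX : 0 ≤ X)
    (hg1 : (m + k - 1) * r + b - (m + k - 1) * X < 0)
    (hgK : (k + m - K) * r + K * b - K * (k + m - K) * X < 0) : False := by
  have hm0 : (0:ℤ) ≤ m := by linarith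
  have hk0 : (0:ℤ) ≤ k := by linarith
  have hkm0 : (0:ℤ) ≤ k * m := mul_nonneg hk0 hm0
  have hgk : 0 ≤ m * r + k * b - k * m * X := by
    nlinarith [mul_le_mul_of_nonneg_left hkA hm0,
      mul_le_mul_of_nonneg_left hmB hk0,
      mul_le_mul_of_nonneg_left hAB hkm0]
  have hg1' : (m + k - 1) * r + b - (m + k - 1) * X ≤ -1 := by linarith
  have hgK' : (k + m - K) * r + K * b - K * (k + m - K) * X ≤ -1 := by linarith
  have hKk : (0:ℤ) ≤ K - k := by linarith
  have hk1 : (0:ℤ) ≤ k - 1 := by linarith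
  have hK1 : (0:ℤ) ≤ K - 1 := by linarith
  have p1 : ((m + k - 1) * r + b - (m + k - 1) * X) * (K - k) ≤ (-1) * (K - k) :=
    mul_le_mul_of_nonneg_right hg1' hKk
  have p2 : ((k + m - K) * r + K * b - K * (k + m - K) * X) * (k - 1) ≤ (-1) * (k - 1) :=
    mul_le_mul_of_nonneg_right hgK' hk1
  have p3 : 0 ≤ X * (k - 1) * (K - k) * (K - 1) :=
    mul_nonneg (mul_nonneg (mul_nonneg hX hk1) hKk) hK1
  have p4 : 0 ≤ (m * r + k * b - k * m * X) * (K - 1) :=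
    mul_nonneg hgk hK1
  have hident : ((m + k - 1) * r + b - (m + k - 1) * X) * (K - k)
      + ((k + m - K) * r + K * b - K * (k + m - K) * X) * (k - 1)
      = (m * r + k * b - k * m * X) * (K - 1) + X * (k - 1) * (K - k) * (K - 1) := by
    ring
  have hKle1 : K ≤ 1 := by linarith
  have hkeq : k = 1 := by linarith
  subst hkeq
  nlinarith [hg1, hgk]

lemma aux1 (g r d r' d' : ℤ) (hr' : 1 ≤ r') (hdg : d ≤ g - 1)
    (h : r - r' < r' * (d - r + r' - d')) :
    r' * r + (g + r - d - 1) - r' * (g + r' - d') < 0 := by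
  nlinarith [mul_nonneg (by linarith : (0:ℤ) ≤ r' - 1) (by linarith : (0:ℤ) ≤ g - d - 1)]

lemma aux2 (g r d r' d' : ℤ) (h : r - r' < r' * (d - r + r' - d')) :
    1 * r + r' * (g + r - d - 1) - r' * 1 * (g + r' - d') < 0 := by nlinarith

lemma aux3 (g r d r' d' : ℤ) (hr : 1 ≤ r) (hd'g : d' ≤ g - 1)
    (h : g + r - d - 1 < (r' - r + 1) * (g + r' - 1 - d')) :
    r' * r + (g + r - d - 1) - r' * (g + r' - d') < 0 := by
  nlinarith [mul_nonneg (by linarith : (0:ℤ) ≤ r - 1) (by linarith : (0:ℤ) ≤ g - d' - 1)]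

lemma aux4 (g r d r' d' : ℤ) (hr : 1 ≤ r)
    (h : g + r - d - 1 < (r' - r + 1) * (g + r' - 1 - d')) :
    (r' - r + 1) * r + r * (g + r - d - 1) - r * (r' - r + 1) * (g + r' - d') < 0 := by
  nlinarith [mul_le_mul_of_nonneg_left
    (by linarith : g + r - d - 1 + 1 ≤ (r' - r + 1) * (g + r' - 1 - d'))
    (by linarith : (0:ℤ) ≤ r)]

theorem stmt3 (g r d r' d' : ℤ) (hg : 3 ≤ g) (hr : 1 ≤ r)
    (hd2 : 2 ≤ d) (hdg : d ≤ g - 1) (hr' : 1 ≤ r') (hd'2 : 2 ≤ d') (hd'g : d' ≤ g - 1)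
    (hle : r' ≤ r → r' * (d - r + r' - d') > r - r')
    (hlt : r < r' → (r' - r + 1) * (g + r' - 1 - d') > g + r - d - 1) :
    ¬ ∃ r₁ r₂ d₁ d₂ : ℤ, 0 ≤ r₁ ∧ 0 ≤ r₂ ∧ 0 ≤ d₁ ∧ 0 ≤ d₂ ∧
      r₁ + r₂ = r' - 1 ∧ d₁ + d₂ ≤ d' - d + 2 * r - 2 ∧
      0 ≤ rho r r₁ d₁ ∧ rho r r₁ d₁ < r ∧
      0 ≤ rho (g + r - d - 1) r₂ d₂ ∧ rho (g + r - d - 1) r₂ d₂ < g + r - d - 1 := by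
  rintro ⟨r₁, r₂, d₁, d₂, hr₁, hr₂, hd₁, hd₂, hsum, hdsum, hρ1, hρ1', hρ2, hρ2'⟩
  obtain rfl : r₂ = r' - 1 - r₁ := by omega
  simp only [rho] at hρ1 hρ1' hρ2 hρ2'
  have hk : (1:ℤ) ≤ r₁ + 1 := by omega
  have hm : (1:ℤ) ≤ r' - r₁ := by omega
  have hkA : (r₁ + 1) * (r - d₁ + r₁) ≤ r := by linarith
  have hkApos : 0 < (r₁ + 1) * (r - d₁ + r₁) := by linarith
  have hmB : (r' - r₁) * ((g + r - d - 1) - d₂ + (r' - 1 - r₁)) ≤ g + r - d - 1 := by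
    nlinarith [hρ2]
  have hmBpos : 0 < (r' - r₁) * ((g + r - d - 1) - d₂ + (r' - 1 - r₁)) := by
    nlinarith [hρ2']
  have hA : 1 ≤ r - d₁ + r₁ := by
    by_contra h
    push_neg at h
    nlinarith [mul_nonpos_of_nonneg_of_nonpos (by omega : (0:ℤ) ≤ r₁ + 1)
      (by omega : r - d₁ + r₁ ≤ 0)]
  have hB : 1 ≤ (g + r - d - 1) - d₂ + (r' - 1 - r₁) := by
    by_contra h
    push_neg at h
    nlinarith [mul_nonpos_of_nonneg_of_nonpos (by omega : (0:ℤ) ≤ r' - r₁)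
      (by omega : (g + r - d - 1) - d₂ + (r' - 1 - r₁) ≤ 0)]
  have hAB : g + r' - d' ≤ (r - d₁ + r₁) + ((g + r - d - 1) - d₂ + (r' - 1 - r₁)) := by
    omega
  have hX : (0:ℤ) ≤ g + r' - d' := by omega
  rcases le_or_gt r' r with hcase | hcase
  · have hle' := hle hcase
    refine key_aux r (g + r - d - 1) (g + r' - d') (r₁ + 1) (r' - r₁) (r - d₁ + r₁)
      ((g + r - d - 1) - d₂ + (r' - 1 - r₁)) r' hk hm hA hB hkA hmB hAB
      (by omega) hX ?_ ?_
    · rw [show (r' - r₁) + (r₁ + 1) - 1 = r' by ring]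
      exact aux1 g r d r' d' hr' hdg hle'
    · rw [show (r₁ + 1) + (r' - r₁) - r' = 1 by ring]
      exact aux2 g r d r' d' hle' 
  · have hlt' := hlt hcase
    have hkK : r₁ + 1 ≤ r := by
      nlinarith [mul_le_mul_of_nonneg_left hA (by omega : (0:ℤ) ≤ r₁ + 1)]
    refine key_aux r (g + r - d - 1) (g + r' - d') (r₁ + 1) (r' - r₁) (r - d₁ + r₁)
      ((g + r - d - 1) - d₂ + (r' - 1 - r₁)) r hk hm hA hB hkA hmB hAB
      hkK hX ?_ ?_
    · rw [show (r' - r₁) + (r₁ + 1) - 1 = r' by ring]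
      exact aux3 g r d r' d' hr hd'g hlt'
    · rw [show (r₁ + 1) + (r' - r₁) - r = r' - r + 1 by ring]
      exact aux4 g r d r' d' hr hlt'
end

section
/- Let g, r, d, r', d' be integers with g ≥ 3, r ≥ 1, 2 ≤ d ≤ g−1, r' ≥ 1, 2 ≤ d' ≤ g−1. Assume: if r' ≤ r then r'·(d−r+r'−d') > r−r', and if r < r' then (r'−r+1)·(g+r'−1−d') > g+r−d−1. Let r₁ be an integer with 0 ≤ r₁ ≤ r'−1, and assume that either r' ≤ r, or r₁ < r < r'. Then, as rational numbers, d'+r+r₁−r'−g + (g+r−d−1)/(r'−r₁) < r₁ + r₁·r/(r₁+1). -/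
theorem stmt4 (g r d r' d' r₁ : ℤ) (hg : 3 ≤ g) (hr : 1 ≤ r)
    (hd2 : 2 ≤ d) (hdg : d ≤ g - 1) (hr' : 1 ≤ r') (hd'2 : 2 ≤ d') (hd'g : d' ≤ g - 1)
    (hle : r' ≤ r → r' * (d - r + r' - d') > r - r')
    (hlt : r < r' → (r' - r + 1) * (g + r' - 1 - d') > g + r - d - 1)
    (hr₁0 : 0 ≤ r₁) (hr₁ : r₁ ≤ r' - 1)
    (hcase : r' ≤ r ∨ (r₁ < r ∧ r < r')) :
    (d' : ℚ) + r + r₁ - r' - g + ((g : ℚ) + r - d - 1) / ((r' : ℚ) - r₁)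
      < (r₁ : ℚ) + (r₁ : ℚ) * r / ((r₁ : ℚ) + 1) := by
  have key : (d' + r + r₁ - r' - g) * ((r' - r₁) * (r₁ + 1)) + (g + r - d - 1) * (r₁ + 1)
      < r₁ * ((r' - r₁) * (r₁ + 1)) + r₁ * r * (r' - r₁) := by
    rcases hcase with h | ⟨h1, h2⟩
    · have H := hle h
      have hp : (0:ℤ) < r' - r₁ := by omega
      have hq : (0:ℤ) < r₁ + 1 := by omega
      have hpq : 0 ≤ r₁ * (r' - r₁ - 1) := mul_nonneg hr₁0 (by omega)
      have hgd : (0:ℤ) ≤ g - d - 1 := by omega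
      have hrr : (0:ℤ) ≤ r - r' := by omega
      nlinarith [mul_pos hp hq, hpq, mul_nonneg hpq hgd, mul_nonneg hpq hrr,
        mul_lt_mul_of_pos_right H (mul_pos hp hq),
        mul_nonneg (mul_nonneg hgd hp.le) hq.le,
        mul_nonneg hgd hpq]
    · have H := hlt h2
      nlinarith [mul_pos (show (0:ℤ) < r' - r₁ by omega) (show (0:ℤ) < r₁ + 1 by omega),
        sq_nonneg (r' - r₁ - 1),
        mul_nonneg hr₁0 (show (0:ℤ) ≤ r - r₁ - 1 by omega)]
  have hp : (0:ℚ) < (r':ℚ) - r₁ := by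
    have : (0:ℤ) < r' - r₁ := by omega
    exact_mod_cast this
  have hq : (0:ℚ) < (r₁:ℚ) + 1 := by
    have : (0:ℤ) < r₁ + 1 := by omega
    exact_mod_cast this
  have keyQ : ((d':ℚ) + r + r₁ - r' - g) * (((r':ℚ) - r₁) * ((r₁:ℚ) + 1))
      + ((g:ℚ) + r - d - 1) * ((r₁:ℚ) + 1)
      < (r₁:ℚ) * (((r':ℚ) - r₁) * ((r₁:ℚ) + 1)) + (r₁:ℚ) * r * ((r':ℚ) - r₁) := by
    exact_mod_cast key
  have hP : (0:ℚ) < ((r':ℚ) - r₁) * ((r₁:ℚ) + 1) := mul_pos hp hq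
  calc (d' : ℚ) + r + r₁ - r' - g + ((g : ℚ) + r - d - 1) / ((r' : ℚ) - r₁)
      = (((d':ℚ) + r + r₁ - r' - g) * (((r':ℚ) - r₁) * ((r₁:ℚ) + 1))
        + ((g:ℚ) + r - d - 1) * ((r₁:ℚ) + 1)) / (((r':ℚ) - r₁) * ((r₁:ℚ) + 1)) := by
        field_simp
    _ < ((r₁:ℚ) * (((r':ℚ) - r₁) * ((r₁:ℚ) + 1)) + (r₁:ℚ) * r * ((r':ℚ) - r₁))
        / (((r':ℚ) - r₁) * ((r₁:ℚ) + 1)) := by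
        apply div_lt_div_of_pos_right keyQ hP
    _ = (r₁ : ℚ) + (r₁ : ℚ) * r / ((r₁ : ℚ) + 1) := by
        field_simp
end

section
/- Let (g,r,d) be an expected maximal triple of integers with g ≥ 3 and (g,r,d) ≠ (6,2,5). Then: if r ≥ 2 then 2d ≥ g−3+4r; if r = 1 then 2d ≥ g; and moreover (r−1)(3g−4)² < 2d²(g−2). -/
theorem stmt5 (g r d : ℤ) (hg : 3 ≤ g) (hEM : ExpectedMaximal g r d)
    (hne : (g, r, d) ≠ (6, 2, 5)) :
    (2 ≤ r → 2 * d ≥ g - 3 + 4 * r) ∧ (r = 1 → 2 * d ≥ g) ∧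
      (r - 1) * (3 * g - 4) ^ 2 < 2 * d ^ 2 * (g - 2) := by
  obtain ⟨hr, hd2, hdg, h1, h2, h3⟩ := hEM
  unfold rho at h1 h2 h3
  have hne' : ¬(g = 6 ∧ r = 2 ∧ d = 5) := by
    rintro ⟨a, b, c⟩; exact hne (by simp [a, b, c])
  have key : 2 ≤ r → 2 * d ≥ g - 3 + 4 * r := by
    intro hr2
    have h3' := h3 hr2
    rcases eq_or_lt_of_le hr2 with hr2' | hr3
    · subst hr2'; omega
    · have hr3' : 3 ≤ r := hr3
      nlinarith [mul_nonneg (by linarith : (0:ℤ) ≤ 2*r - 3) (by omega : (0:ℤ) ≤ g - d - 1),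
        mul_nonneg (by linarith : (0:ℤ) ≤ r) (by linarith : (0:ℤ) ≤ r - 3)]
  refine ⟨key, ?_, ?_⟩
  · intro h1'; subst h1'; omega
  · rcases eq_or_lt_of_le hr with hr1 | hr2
    · rw [← hr1]
      nlinarith [sq_nonneg d, mul_pos (by nlinarith : (0:ℤ) < d^2) (by linarith : (0:ℤ) < g - 2)]
    · have hr2' : (2:ℤ) ≤ r := hr2
      have hkey := key hr2'
      have h3' := h3 hr2'
      have hgr : g ≥ r * r + r := by
        nlinarith [mul_nonneg (by linarith : (0:ℤ) ≤ r) (by omega : (0:ℤ) ≤ g - d - 1)]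
      -- main cubic inequality F > 0
      have hF : 0 < (g - 2) * (g + 4*r - 3)^2 - 2 * (r - 1) * (3*g - 4)^2 := by
        rcases lt_or_ge r 4 with hr4 | hr4
        · interval_cases r
          · -- r = 2, B = g - 6 ≥ 0
            have hB : (0:ℤ) ≤ g - 6 := by linarith
            nlinarith [mul_nonneg (mul_nonneg hB hB) hB, mul_nonneg hB hB]
          · -- r = 3, B = g - 12 ≥ 0
            have hB : (0:ℤ) ≤ g - 12 := by linarith
            nlinarith [mul_nonneg (mul_nonneg hB hB) hB, mul_nonneg hB hB]
        · have hB : (0:ℤ) ≤ g - r*r - r := by linarith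
          have ht : (0:ℤ) ≤ r - 4 := by linarith
          set B := g - r*r - r with hBdef
          set t := r - 4 with htdef
          have hexp : (g - 2) * (g + 4*r - 3)^2 - 2 * (r - 1) * (3*g - 4)^2 =
              786 + 829*t + 603*t^2 + 339*t^3 + 109*t^4 + 17*t^5 + t^6
              + B*(261 + 276*t + 139*t^2 + 34*t^3 + 3*t^4)
              + B^2*(30 + 17*t + 3*t^2) + B^3 := by
            simp only [hBdef, htdef]; ring
          have m : ∀ i j : ℕ, (0:ℤ) ≤ B^i * t^j :=
            fun i j => mul_nonneg (pow_nonneg hB i) (pow_nonneg ht j)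
          rw [hexp]
          nlinarith [m 0 1, m 0 2, m 0 3, m 0 4, m 0 5, m 0 6, m 1 0, m 1 1, m 1 2,
            m 1 3, m 1 4, m 2 0, m 2 1, m 2 2, m 3 0]
      -- combine: 2*(2d²(g−2) − (r−1)(3g−4)²) = (4d²−X²)(g−2) + F
      nlinarith [mul_nonneg (mul_nonneg (by linarith : (0:ℤ) ≤ 2*d - (g + 4*r - 3))
        (by linarith : (0:ℤ) ≤ 2*d + (g + 4*r - 3))) (by linarith : (0:ℤ) ≤ g - 2)]
end

section
/- Let (g,r,d) be an expected maximal triple of integers with 2 ≤ d ≤ g−1, and let r', d' be integers with r' ≥ 1, 2 ≤ d' ≤ g−1 and ρ(g,r',d') < 0. Assume that either (a) (g,r',d') is an expected maximal triple and r' ≠ r, or (b) r' = r and d' ≤ d−1, or (c) r' = r+1 and d' ≤ d+1. Assume moreover that (g,r,d,r',d') is none of (6,2,5,1,3), (7,2,6,1,4), (8,1,4,2,7), (9,2,7,1,5). Then: if r' ≤ r then r'·(d−r+r'−d') > r−r', and if r < r' then (r'−r+1)·(g+r'−1−d') > g+r−d−1. -/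
private lemma BN_aux1 (r S S' g : ℤ) (h4 : 4 ≤ r) (hA : g + 1 ≤ 2 * S') (hB : r * S ≤ g)
    (hS : r + 1 ≤ S) : S' - S > r - 1 := by
  nlinarith [mul_le_mul_of_nonneg_left hS (show (0:ℤ) ≤ r - 2 by omega)]

private lemma BN_aux2 (r' S S' g : ℤ) (h2 : 2 ≤ r') (hA : g + 1 ≤ (r' + 1) * S')
    (hB : (r' + 1) * S ≤ g) : r' * (S' - S) > 1 := by
  have h : (r' + 1) * S < (r' + 1) * S' := by linarith
  have h2' := lt_of_mul_lt_mul_left h (by omega : (0:ℤ) ≤ r' + 1)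
  nlinarith [h2']

private lemma BN_aux3 (r' k S S' g : ℤ) (h2 : 2 ≤ r') (hk : 2 ≤ k)
    (hA : g + 1 ≤ (r' + 1) * S') (hB : (r' + k) * S ≤ g) (hS : r' + k + 1 ≤ S) :
    r' * (S' - S) > k := by
  have h1 : (r' + 1) * (r' * (S' - S)) ≥ r' * ((k - 1) * S + 1) := by
    nlinarith [mul_le_mul_of_nonneg_left (show (r' + k) * S + 1 ≤ (r' + 1) * S' by linarith)
      (show (0:ℤ) ≤ r' by omega)]
  have h2' : r' * ((k - 1) * S + 1) ≥ r' * ((k - 1) * (r' + k + 1) + 1) := by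
    nlinarith [mul_le_mul_of_nonneg_left hS
      (show (0:ℤ) ≤ r' * (k - 1) by nlinarith)]
  have h3 : r' * ((k - 1) * (r' + k + 1) + 1) ≥ (r' + 1) * (k + 1) := by
    nlinarith [mul_nonneg (show (0:ℤ) ≤ r' - 2 by omega) (show (0:ℤ) ≤ k - 2 by omega),
      mul_nonneg (show (0:ℤ) ≤ r' - 2 by omega) (show (0:ℤ) ≤ k - 1 by omega),
      mul_pos (show (0:ℤ) < r' by omega) (show (0:ℤ) < k by omega),
      sq_nonneg (k - 1), sq_nonneg r']
  have hfin := le_of_mul_le_mul_left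
    (show (r' + 1) * (k + 1) ≤ (r' + 1) * (r' * (S' - S)) by linarith)
    (show (0:ℤ) < r' + 1 by omega)
  linarith

private lemma BN_aux4 (r m S S' g : ℤ) (hr : 1 ≤ r) (hm : 1 ≤ m)
    (hcase : 2 ≤ r ∨ 2 ≤ m)
    (hA : g + 1 ≤ (r + m + 1) * S') (hC : (r + 1) * S ≤ g + r + 1)
    (hS' : r + m + 1 ≤ S') : (m + 1) * (S' - 1) > S - 1 := by
  by_contra hc
  push_neg at hc
  have hP : (r + 1) * S - r ≤ (r + m + 1) * S' := by linarith
  have hii : (m + 1) * (r + m) + 1 ≤ S := by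
    nlinarith [mul_le_mul_of_nonneg_left hS' (show (0:ℤ) ≤ m + 1 by omega), hc]
  have hi : m * r * S ≤ 2 * m * r + m ^ 2 + m + r := by
    nlinarith [mul_le_mul_of_nonneg_left hc (show (0:ℤ) ≤ r + m + 1 by omega),
      mul_le_mul_of_nonneg_left hP (show (0:ℤ) ≤ m + 1 by omega)]
  have hfin := mul_le_mul_of_nonneg_left hii
    (show (0:ℤ) ≤ m * r by positivity)
  rcases hcase with h | h
  · nlinarith [hfin, hi, mul_pos (mul_pos (show (0:ℤ) < m by omega) (show (0:ℤ) < m by omega)) (show (0:ℤ) < r by omega),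
      mul_nonneg (mul_nonneg (show (0:ℤ) ≤ m^2 by positivity) (show (0:ℤ) ≤ r by omega)) (show (0:ℤ) ≤ r - 2 by omega),
      mul_nonneg (mul_nonneg (show (0:ℤ) ≤ m by omega) (show (0:ℤ) ≤ r by omega)) (show (0:ℤ) ≤ r - 2 by omega),
      mul_nonneg (mul_nonneg (show (0:ℤ) ≤ m by omega) (show (0:ℤ) ≤ m^2 - 1 by nlinarith)) (show (0:ℤ) ≤ r by omega)]
  · nlinarith [hfin, hi,
      mul_nonneg (mul_nonneg (show (0:ℤ) ≤ m^2 by positivity) (show (0:ℤ) ≤ r by omega)) (show (0:ℤ) ≤ r - 1 by omega),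
      mul_nonneg (mul_nonneg (show (0:ℤ) ≤ m by omega) (show (0:ℤ) ≤ r^2 by positivity)) (show (0:ℤ) ≤ m - 2 by omega),
      mul_nonneg (mul_nonneg (show (0:ℤ) ≤ m by omega) (show (0:ℤ) ≤ r by omega)) (show (0:ℤ) ≤ m - 2 by omega),
      mul_nonneg (show (0:ℤ) ≤ m * r - 1 by nlinarith) (show (0:ℤ) ≤ m + r by omega),
      mul_pos (show (0:ℤ) < m by omega) (show (0:ℤ) < r by omega)]

set_option maxHeartbeats 1000000 in
theorem stmt7 (g r d r' d' : ℤ) (hEM : ExpectedMaximal g r d)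
    (hd2 : 2 ≤ d) (hdg : d ≤ g - 1)
    (hr' : 1 ≤ r') (hd'2 : 2 ≤ d') (hd'g : d' ≤ g - 1) (hrho : rho g r' d' < 0)
    (habc : (ExpectedMaximal g r' d' ∧ r' ≠ r) ∨ (r' = r ∧ d' ≤ d - 1) ∨
      (r' = r + 1 ∧ d' ≤ d + 1))
    (hexc1 : (g, r, d, r', d') ≠ (6, 2, 5, 1, 3))
    (hexc2 : (g, r, d, r', d') ≠ (7, 2, 6, 1, 4))
    (hexc3 : (g, r, d, r', d') ≠ (8, 1, 4, 2, 7))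
    (hexc4 : (g, r, d, r', d') ≠ (9, 2, 7, 1, 5)) :
    (r' ≤ r → r' * (d - r + r' - d') > r - r') ∧
    (r < r' → (r' - r + 1) * (g + r' - 1 - d') > g + r - d - 1) := by
  simp only [ne_eq, Prod.mk.injEq, not_and] at hexc1 hexc2 hexc3 hexc4
  obtain ⟨hr1, -, -, hρ, hρ1, hρ2⟩ := hEM
  simp only [rho] at hρ hρ1 hρ2 hrho
  have hA2 : g + 1 ≤ (r + 1) * (g - d + r) := by linarith
  have hC : (r + 1) * (g - d + r) ≤ g + r + 1 := by linarith [hρ1]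
  have hA : g + 1 ≤ (r' + 1) * (g - d' + r') := by linarith
  rcases habc with ⟨⟨hr'1, hd'2', hd'g', hρ', hρ1', hρ2'⟩, hne⟩ | ⟨hrr, hdd⟩ | ⟨hrr, hdd⟩
  · -- case (a)
    simp only [rho] at hρ' hρ1' hρ2'
    rcases lt_or_gt_of_ne hne with hlt | hgt
    · -- r' < r, prove first bullet
      have hr2 : 2 ≤ r := by omega
      have hB : r * (g - d + r) ≤ g := by linarith [hρ2 hr2]
      refine ⟨fun _ => ?_, fun h => absurd h (by omega)⟩
      by_cases h1 : r' = 1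
      · subst h1
        by_cases h2 : r = 2
        · subst h2; omega
        · by_cases h3 : r = 3
          · subst h3; omega
          · have h4 : 4 ≤ r := by omega
            have := BN_aux1 r (g - d + r) (g - d' + 1) g h4 (by linarith) hB (by omega)
            linarith
      · have hr'2 : 2 ≤ r' := by omega
        by_cases h2 : r = r' + 1
        · subst h2
          have := BN_aux2 r' (g - d + (r' + 1)) (g - d' + r') g hr'2 (by linarith)
            (by linarith [hB])
          linarith
        · have := BN_aux3 r' (r - r') (g - d + r) (g - d' + r') g hr'2 (by omega)
            (by linarith) (by linarith [hB]) (by omega)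
          linarith
    · -- r < r', prove second bullet
      refine ⟨fun h => absurd h (by omega), fun _ => ?_⟩
      by_cases h1 : r = 1 ∧ r' = 2
      · obtain ⟨e1, e2⟩ := h1; subst e1; subst e2; omega
      · have := BN_aux4 r (r' - r) (g - d + r) (g - d' + r') g hr1 (by omega)
          (by omega) (by linarith [hA]) hC (by omega)
        linarith
  · -- case (b): r' = r, d' ≤ d - 1
    subst hrr
    refine ⟨fun _ => ?_, fun h => absurd h (lt_irrefl _)⟩
    have := mul_pos (show (0:ℤ) < r' by omega) (show (0:ℤ) < d - d' by omega)
    linarith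
  · -- case (c): r' = r + 1, d' ≤ d + 1
    subst hrr
    exact ⟨fun h => absurd h (by omega), fun _ => by linarith⟩
end

section
/- Let g and d be integers with g ≥ 3 and 2 ≤ d ≤ g−1, and let x, y be integers satisfying: (g−1)x² − dxy ≥ 0; (g−1)(1−x)² + d(1−x)y ≥ −1; and 2(g−1)(x−1) < dy < 2(g−1)x. Then either x = 0 and −g ≤ dy < 0, or x = 1 and 0 < dy ≤ g−1. -/
theorem stmt11 (g d x y : ℤ) (hg : 3 ≤ g) (hd2 : 2 ≤ d) (hdg : d ≤ g - 1)
    (h1 : 0 ≤ (g - 1) * x ^ 2 - d * x * y)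
    (h2 : -1 ≤ (g - 1) * (1 - x) ^ 2 + d * (1 - x) * y)
    (h3 : 2 * (g - 1) * (x - 1) < d * y) (h4 : d * y < 2 * (g - 1) * x) :
    (x = 0 ∧ -g ≤ d * y ∧ d * y < 0) ∨ (x = 1 ∧ 0 < d * y ∧ d * y ≤ g - 1) := by
  rcases le_or_gt x 0 with hx | hx
  · left
    have hx0 : x = 0 := by
      rcases eq_or_lt_of_le hx with h | h
      · exact h
      exfalso
      have hx1 : x ≤ -1 := by linarith
      nlinarith [mul_le_mul_of_nonpos_left h4.le (show x ≤ 0 by linarith)]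
    subst hx0
    refine ⟨rfl, by nlinarith, by linarith⟩
  · right
    have hx1 : x = 1 := by
      by_contra h
      have hx2 : 2 ≤ x := by omega
      nlinarith [mul_le_mul_of_nonneg_left h3.le (show (0:ℤ) ≤ x by linarith)]
    subst hx1
    refine ⟨rfl, by linarith, by nlinarith⟩
end

section
/- Let g, r, d be integers with g ≥ 3, r ≥ 2, 2 ≤ d ≤ g−1 and d² > 4(g−1)(r−1), and set t = √(d² − 4(g−1)(r−1)), a positive real number with t < d. Let x, y be integers satisfying: (g−1)x² − dxy + (r−1)y² ≥ 0; (g−1)(1−x)² + d(1−x)y + (r−1)y² ≥ −1; and 2(g−1)(x−1) < dy < 2(g−1)x. Then, regarding x and y as real numbers, either (1) 0 < x ≤ max{1 + d/(t·√(g−1)), 2(r−1)g/((d−t)·t)} and 2(g−1)(x−1)/d < y ≤ min{(d−t)x/(2(r−1)), g/t}, or (2) −2(r−1)g/((d+t)·t) ≤ x ≤ 0 and max{−g/t, 2(g−1)(x−1)/d} ≤ y ≤ (d+t)x/(2(r−1)), with y ≠ 0 and y ≠ 2(g−1)(x−1)/d. -/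
private lemma aux_sqle (a b : ℝ) (h : a ^ 2 ≤ b ^ 2) (hb : 0 ≤ b) : a ≤ b := by
  nlinarith [sq_nonneg (a - b), sq_nonneg (a + b)]

private lemma auxSqMono (a b : ℝ) (h0 : 0 ≤ a) (h : a ≤ b) : a ^ 2 ≤ b ^ 2 := by nlinarith

private lemma auxPosY (d y : ℤ) (hd : 2 ≤ d) (h : 1 ≤ d * y) : 1 ≤ y := by nlinarith

private lemma auxNegY (d y : ℤ) (hd : 2 ≤ d) (h : d * y ≤ -1) : y ≤ -1 := by nlinarith

private lemma auxYup (D T G R X Y : ℝ) (hT2 : T ^ 2 = D ^ 2 - 4 * G * R) (hG : 0 < G)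
    (h : D * Y + T * Y ≤ 2 * G * X) (hdT : 0 ≤ D - T) : Y * (2 * R) ≤ (D - T) * X := by
  have hstep : (D * Y + T * Y) * (D - T) ≤ (2 * G * X) * (D - T) :=
    mul_le_mul_of_nonneg_right h hdT
  have hTY : T ^ 2 * Y = (D ^ 2 - 4 * G * R) * Y := by rw [hT2]
  have h2 : 2 * G * (Y * (2 * R)) ≤ 2 * G * ((D - T) * X) := by nlinarith [hstep, hTY]
  exact le_of_mul_le_mul_left h2 (by linarith)

private lemma auxYup2 (D T G R X Y : ℝ) (hT2 : T ^ 2 = D ^ 2 - 4 * G * R) (hG : 0 < G)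
    (h : D * Y - T * Y ≤ 2 * G * X) (hdT : 0 ≤ D + T) : Y * (2 * R) ≤ (D + T) * X := by
  have hstep : (D * Y - T * Y) * (D + T) ≤ (2 * G * X) * (D + T) :=
    mul_le_mul_of_nonneg_right h hdT
  have hTY : T ^ 2 * Y = (D ^ 2 - 4 * G * R) * Y := by rw [hT2]
  have h2 : 2 * G * (Y * (2 * R)) ≤ 2 * G * ((D + T) * X) := by nlinarith [hstep, hTY]
  exact le_of_mul_le_mul_left h2 (by linarith)

private lemma auxXlow (D T G R X Y gg : ℝ) (hT2 : T ^ 2 = D ^ 2 - 4 * G * R) (hG : 0 < G)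
    (hT : 0 < T) (h : D * Y - T * Y ≤ 2 * G * X) (hTY : -gg ≤ T * Y) (hdT : 0 < D - T)
    (hdT2 : 0 ≤ D + T) : -X * ((D + T) * T) ≤ 2 * R * gg := by
  have s1 : (D * Y - T * Y) * T ≤ (2 * G * X) * T := mul_le_mul_of_nonneg_right h hT.le
  have s2 : (-gg) * (D - T) ≤ (T * Y) * (D - T) := mul_le_mul_of_nonneg_right hTY hdT.le
  have s3 : -(2 * G * X * T) ≤ gg * (D - T) := by nlinarith [s1, s2]
  have s4 : (-(2 * G * X * T)) * (D + T) ≤ (gg * (D - T)) * (D + T) :=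
    mul_le_mul_of_nonneg_right s3 hdT2
  have hTYg : T ^ 2 * gg = (D ^ 2 - 4 * G * R) * gg := by rw [hT2]
  have h2 : 2 * G * (-X * ((D + T) * T)) ≤ 2 * G * (2 * R * gg) := by nlinarith [s4, hTYg]
  exact le_of_mul_le_mul_left h2 (by linarith)

private lemma auxX1 (D T sg X : ℝ) (hsg : 0 < sg) (hT : 0 < T)
    (h : 2 * sg ^ 2 * T * (X - 1) ≤ 2 * D * sg) : X ≤ 1 + D / (T * sg) := by
  have h2 : (X - 1) * (T * sg) ≤ D :=
    le_of_mul_le_mul_left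
      (show (2 * sg) * ((X - 1) * (T * sg)) ≤ (2 * sg) * D by nlinarith [h]) (by linarith)
  have h3 : X - 1 ≤ D / (T * sg) := (le_div_iff₀ (by positivity)).mpr h2
  linarith

private lemma auxX2 (D T G R gg X : ℝ) (hT2 : T ^ 2 = D ^ 2 - 4 * G * R) (hG : 0 < G)
    (hT : 0 < T) (hdT : 0 < D - T) (h : 2 * G * T * X ≤ gg * (D + T)) :
    X ≤ 2 * R * gg / ((D - T) * T) := by
  rw [le_div_iff₀ (mul_pos hdT hT)]
  have s1 : (2 * G * T * X) * (D - T) ≤ (gg * (D + T)) * (D - T) :=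
    mul_le_mul_of_nonneg_right h hdT.le
  have hT2g : T ^ 2 * gg = (D ^ 2 - 4 * G * R) * gg := by rw [hT2]
  have s2 : 2 * G * (X * ((D - T) * T)) ≤ 2 * G * (2 * R * gg) := by nlinarith [s1, hT2g]
  exact le_of_mul_le_mul_left s2 (by linarith)

private lemma auxKey (P W sg : ℝ) (hsg : 1 < sg) (hW0 : 0 ≤ W)
    (hWsq : W ^ 2 = P ^ 2 - 4 * sg ^ 2) (hP : 2 * sg < P) (hPg : P ≤ sg ^ 2 + 1) :
    (P - 2 * sg) * (sg + 1) ≤ W * (sg - 1) := by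
  have hW2 : W ^ 2 * (sg - 1) ^ 2 = (P ^ 2 - 4 * sg ^ 2) * (sg - 1) ^ 2 := by rw [hWsq]
  have hsq : ((P - 2 * sg) * (sg + 1)) ^ 2 ≤ (W * (sg - 1)) ^ 2 := by
    nlinarith [hW2, mul_nonneg (mul_nonneg (show (0:ℝ) ≤ P - 2 * sg by linarith)
      (show (0:ℝ) ≤ 4 * sg by linarith)) (show (0:ℝ) ≤ sg ^ 2 + 1 - P by linarith)]
  exact aux_sqle _ _ hsq (mul_nonneg hW0 (by linarith))

-- combines the pieces of the "big TY" subcase into one multiplied inequality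
private lemma auxComb (D T sg X Y W : ℝ) (hT : 0 ≤ T) (hD : 0 ≤ D)
    (hmW : 2 * sg ^ 2 * (X - 1) ≤ D * Y - W)
    (hkey : (T * Y - 2 * sg) * (sg + 1) ≤ W * (sg - 1)) (hsg : 0 < sg + 1) :
    2 * sg ^ 2 * T * (X - 1) * (sg + 1) ≤
      W * (D * (sg - 1) - T * (sg + 1)) + 2 * D * sg * (sg + 1) := by
  have s1 : (2 * sg ^ 2 * (X - 1)) * (T * (sg + 1)) ≤ (D * Y - W) * (T * (sg + 1)) :=
    mul_le_mul_of_nonneg_right hmW (by positivity)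
  have s2 : D * ((T * Y - 2 * sg) * (sg + 1)) ≤ D * (W * (sg - 1)) :=
    mul_le_mul_of_nonneg_left hkey hD
  nlinarith [s1, s2]

set_option maxHeartbeats 8000000 in
theorem stmt12 (g r d x y : ℤ) (hg : 3 ≤ g) (hr : 2 ≤ r) (hd2 : 2 ≤ d) (hdg : d ≤ g - 1)
    (hdisc : 4 * (g - 1) * (r - 1) < d ^ 2)
    (h1 : 0 ≤ (g - 1) * x ^ 2 - d * x * y + (r - 1) * y ^ 2)
    (h2 : -1 ≤ (g - 1) * (1 - x) ^ 2 + d * (1 - x) * y + (r - 1) * y ^ 2)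
    (h3 : 2 * (g - 1) * (x - 1) < d * y) (h4 : d * y < 2 * (g - 1) * x) :
    (fun t : ℝ =>
      ((0 : ℝ) < (x : ℝ) ∧
        (x : ℝ) ≤ max (1 + (d : ℝ) / (t * Real.sqrt ((g : ℝ) - 1)))
          (2 * ((r : ℝ) - 1) * (g : ℝ) / (((d : ℝ) - t) * t)) ∧
        2 * ((g : ℝ) - 1) * ((x : ℝ) - 1) / (d : ℝ) < (y : ℝ) ∧
        (y : ℝ) ≤ min (((d : ℝ) - t) * (x : ℝ) / (2 * ((r : ℝ) - 1))) ((g : ℝ) / t))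
      ∨
      (-(2 * ((r : ℝ) - 1) * (g : ℝ) / (((d : ℝ) + t) * t)) ≤ (x : ℝ) ∧ (x : ℝ) ≤ 0 ∧
        max (-((g : ℝ) / t)) (2 * ((g : ℝ) - 1) * ((x : ℝ) - 1) / (d : ℝ)) ≤ (y : ℝ) ∧
        (y : ℝ) ≤ ((d : ℝ) + t) * (x : ℝ) / (2 * ((r : ℝ) - 1)) ∧
        (y : ℝ) ≠ 0 ∧ (y : ℝ) ≠ 2 * ((g : ℝ) - 1) * ((x : ℝ) - 1) / (d : ℝ)))
      (Real.sqrt ((d : ℝ) ^ 2 - 4 * ((g : ℝ) - 1) * ((r : ℝ) - 1))) := by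
  beta_reduce
  have hg' : (3:ℝ) ≤ (g:ℝ) := by exact_mod_cast hg
  have hr' : (2:ℝ) ≤ (r:ℝ) := by exact_mod_cast hr
  have hd' : (2:ℝ) ≤ (d:ℝ) := by exact_mod_cast hd2
  have hdg' : (d:ℝ) ≤ (g:ℝ) - 1 := by exact_mod_cast hdg
  have hdisc' : 4*((g:ℝ)-1)*((r:ℝ)-1) < (d:ℝ)^2 := by exact_mod_cast hdisc
  have hGpos : (0:ℝ) < (g:ℝ) - 1 := by linarith
  have hRpos : (0:ℝ) < (r:ℝ) - 1 := by linarith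
  have hgpos : (0:ℝ) < (g:ℝ) := by linarith
  have h1' : (0:ℝ) ≤ ((g:ℝ)-1)*(x:ℝ)^2 - (d:ℝ)*(x:ℝ)*(y:ℝ) + ((r:ℝ)-1)*(y:ℝ)^2 := by
    exact_mod_cast h1
  have h2' : (-1:ℝ) ≤ ((g:ℝ)-1)*(1-(x:ℝ))^2 + (d:ℝ)*(1-(x:ℝ))*(y:ℝ) + ((r:ℝ)-1)*(y:ℝ)^2 := by
    exact_mod_cast h2
  have hA' : (d:ℝ)*(y:ℝ) + 1 ≤ 2*((g:ℝ)-1)*(x:ℝ) := by exact_mod_cast Int.lt_iff_add_one_le.mp h4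
  have hB' : 2*((g:ℝ)-1)*((x:ℝ)-1) + 1 ≤ (d:ℝ)*(y:ℝ) := by
    exact_mod_cast Int.lt_iff_add_one_le.mp h3
  set T := Real.sqrt ((d:ℝ)^2 - 4*((g:ℝ)-1)*((r:ℝ)-1)) with hTdef
  have hT0 : 0 ≤ T := Real.sqrt_nonneg _
  have hTsq : T^2 = (d:ℝ)^2 - 4*((g:ℝ)-1)*((r:ℝ)-1) := Real.sq_sqrt (by linarith)
  have hTpos : 0 < T := Real.sqrt_pos.mpr (by linarith)
  have hTd : T < (d:ℝ) := by
    rw [hTdef]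
    exact (Real.sqrt_lt' (by linarith)).mpr (by linarith [mul_pos hGpos hRpos])
  set sg := Real.sqrt ((g:ℝ)-1) with hsgdef
  have hsg0 : 0 < sg := Real.sqrt_pos.mpr hGpos
  have hsg2 : sg^2 = (g:ℝ)-1 := Real.sq_sqrt (by linarith)
  have hsg1 : 1 < sg := by
    rw [hsgdef]
    exact (Real.lt_sqrt (by norm_num)).mpr (by linarith)
  have hgsg : (g:ℝ) = sg^2 + 1 := by rw [hsg2]; ring
  have keyA : ((d:ℝ)^2 - 4*((g:ℝ)-1)*((r:ℝ)-1))*(y:ℝ)^2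
      ≤ (2*((g:ℝ)-1)*(x:ℝ) - (d:ℝ)*(y:ℝ))^2 := by
    linarith [mul_nonneg (show (0:ℝ) ≤ 4*((g:ℝ)-1) by linarith) h1']
  have keyB : ((d:ℝ)^2 - 4*((g:ℝ)-1)*((r:ℝ)-1))*(y:ℝ)^2
      ≤ ((d:ℝ)*(y:ℝ) - 2*((g:ℝ)-1)*((x:ℝ)-1))^2 + 4*((g:ℝ)-1) := by
    linarith [mul_nonneg (show (0:ℝ) ≤ 4*((g:ℝ)-1) by linarith)
      (show (0:ℝ) ≤ ((g:ℝ)-1)*(1-(x:ℝ))^2 + (d:ℝ)*(1-(x:ℝ))*(y:ℝ) + ((r:ℝ)-1)*(y:ℝ)^2 + 1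
        by linarith)]
  have hPS : (T*(y:ℝ))^2 ≤ (2*((g:ℝ)-1)*(x:ℝ) - (d:ℝ)*(y:ℝ))^2 := by
    have h6 : T^2*(y:ℝ)^2 ≤ (2*((g:ℝ)-1)*(x:ℝ) - (d:ℝ)*(y:ℝ))^2 := by rw [hTsq]; exact keyA
    calc (T*(y:ℝ))^2 = T^2*(y:ℝ)^2 := by ring
    _ ≤ _ := h6
  have hPM : (T*(y:ℝ))^2 ≤ ((d:ℝ)*(y:ℝ) - 2*((g:ℝ)-1)*((x:ℝ)-1))^2 + 4*((g:ℝ)-1) := by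
    have h6 : T^2*(y:ℝ)^2 ≤ ((d:ℝ)*(y:ℝ) - 2*((g:ℝ)-1)*((x:ℝ)-1))^2 + 4*((g:ℝ)-1) := by
      rw [hTsq]; exact keyB
    calc (T*(y:ℝ))^2 = T^2*(y:ℝ)^2 := by ring
    _ ≤ _ := h6
  have hT2Y2 : (T*(y:ℝ))^2 ≤ (g:ℝ)^2 := by
    rcases le_or_gt (d*y - 2*(g-1)*(x-1)) (g-2) with hm | hm
    · have hm' : (d:ℝ)*(y:ℝ) - 2*((g:ℝ)-1)*((x:ℝ)-1) ≤ (g:ℝ)-2 := by exact_mod_cast hm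
      have hmm := auxSqMono ((d:ℝ)*(y:ℝ) - 2*((g:ℝ)-1)*((x:ℝ)-1)) ((g:ℝ)-2)
        (by linarith) hm'
      linarith [hPM, hmm]
    · have hm' : (g:ℝ)-1 ≤ (d:ℝ)*(y:ℝ) - 2*((g:ℝ)-1)*((x:ℝ)-1) := by
        have h7 : g - 1 ≤ d*y - 2*(g-1)*(x-1) := by linarith
        exact_mod_cast h7
      have hss := auxSqMono (2*((g:ℝ)-1)*(x:ℝ) - (d:ℝ)*(y:ℝ)) ((g:ℝ)-1)
        (by linarith) (by linarith)
      linarith [hPS, hss]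
  have hTY1 : T*(y:ℝ) ≤ (g:ℝ) := aux_sqle _ _ hT2Y2 (by linarith)
  have hTY2 : -(g:ℝ) ≤ T*(y:ℝ) := by
    have h8 : (-(T*(y:ℝ)))^2 ≤ (g:ℝ)^2 := by rw [neg_sq]; exact hT2Y2
    have := aux_sqle _ _ h8 (show (0:ℝ) ≤ (g:ℝ) by linarith)
    linarith
  rcases le_or_gt 1 x with hx | hx
  · -- positive case
    have hx' : (1:ℝ) ≤ (x:ℝ) := by exact_mod_cast hx
    have hy0 : 1 ≤ y := by
      have h0 : (0:ℤ) ≤ 2*(g-1)*(x-1) := mul_nonneg (by omega) (by omega)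
      exact auxPosY d y hd2 (by linarith [h3, h0])
    have hy' : (1:ℝ) ≤ (y:ℝ) := by exact_mod_cast hy0
    have hS1 : (1:ℝ) ≤ 2*((g:ℝ)-1)*(x:ℝ) - (d:ℝ)*(y:ℝ) := by linarith
    have hTYS : T*(y:ℝ) ≤ 2*((g:ℝ)-1)*(x:ℝ) - (d:ℝ)*(y:ℝ) := aux_sqle _ _ hPS (by linarith)
    refine Or.inl ⟨by linarith, ?_, ?_, ?_⟩
    · -- x upper bound
      rcases le_or_gt (T*(y:ℝ)) (2*sg) with hty | hty
      · -- small T*y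
        refine le_max_of_le_left (auxX1 (d:ℝ) T sg (x:ℝ) hsg0 hTpos ?_)
        have hB'' : 2*sg^2*((x:ℝ)-1) + 1 ≤ (d:ℝ)*(y:ℝ) := by rw [hsg2]; exact hB'
        have s1 : (2*sg^2*((x:ℝ)-1)) * T ≤ ((d:ℝ)*(y:ℝ) - 1) * T :=
          mul_le_mul_of_nonneg_right (by linarith) hT0
        have s2 : (T*(y:ℝ)) * (d:ℝ) ≤ (2*sg) * (d:ℝ) :=
          mul_le_mul_of_nonneg_right hty (by linarith)
        linarith [s1, s2, hT0]
      · -- big T*y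
        set W := Real.sqrt ((T*(y:ℝ))^2 - 4*((g:ℝ)-1)) with hWdef
        have hin : (0:ℝ) ≤ (T*(y:ℝ))^2 - 4*((g:ℝ)-1) := by
          have := auxSqMono (2*sg) (T*(y:ℝ)) (by linarith) hty.le
          linarith [this, hsg2]
        have hW0 : 0 ≤ W := Real.sqrt_nonneg _
        have hWsq : W^2 = (T*(y:ℝ))^2 - 4*((g:ℝ)-1) := Real.sq_sqrt hin
        have hWsq' : W^2 = (T*(y:ℝ))^2 - 4*sg^2 := by rw [hWsq, hsg2]
        have hkey : (T*(y:ℝ) - 2*sg)*(sg+1) ≤ W*(sg-1) :=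
          auxKey (T*(y:ℝ)) W sg hsg1 hW0 hWsq' hty (by rw [← hgsg]; exact hTY1)
        have hmWsq : W^2 ≤ ((d:ℝ)*(y:ℝ) - 2*((g:ℝ)-1)*((x:ℝ)-1))^2 := by
          rw [hWsq]; linarith [hPM]
        have hmW : W ≤ (d:ℝ)*(y:ℝ) - 2*((g:ℝ)-1)*((x:ℝ)-1) :=
          aux_sqle _ _ hmWsq (by linarith)
        have hmW' : 2*sg^2*((x:ℝ)-1) ≤ (d:ℝ)*(y:ℝ) - W := by rw [hsg2]; linarith
        have hcomb := auxComb (d:ℝ) T sg (x:ℝ) (y:ℝ) W hT0 (by linarith) hmW' hkey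
          (by linarith)
        rcases le_or_gt ((d:ℝ)*(sg-1) - T*(sg+1)) 0 with hc | hc
        · refine le_max_of_le_left (auxX1 (d:ℝ) T sg (x:ℝ) hsg0 hTpos ?_)
          have hWc : W*((d:ℝ)*(sg-1) - T*(sg+1)) ≤ 0 := mul_nonpos_of_nonneg_of_nonpos hW0 hc
          have hdiv : (2*sg^2*T*((x:ℝ)-1))*(sg+1) ≤ (2*(d:ℝ)*sg)*(sg+1) := by
            linarith [hcomb, hWc]
          exact le_of_mul_le_mul_right hdiv (by linarith)
        · refine le_max_of_le_right ?_
          have hWle : W ≤ sg^2 - 1 := by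
            have h9 : W^2 ≤ (sg^2-1)^2 := by
              have hg2 : (g:ℝ)^2 = (sg^2+1)^2 := by rw [hgsg]
              rw [hWsq']
              linarith [hT2Y2, hg2]
            exact aux_sqle _ _ h9 (by linarith [hsg2])
          have s3 : W*((d:ℝ)*(sg-1) - T*(sg+1)) ≤ (sg^2-1)*((d:ℝ)*(sg-1) - T*(sg+1)) :=
            mul_le_mul_of_nonneg_right hWle hc.le
          have hdiv : (2*sg^2*T*(x:ℝ))*(sg+1) ≤ ((sg^2+1)*((d:ℝ)+T))*(sg+1) := by
            linarith [hcomb, s3]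
          have h10 : 2*sg^2*T*(x:ℝ) ≤ (sg^2+1)*((d:ℝ)+T) :=
            le_of_mul_le_mul_right hdiv (by linarith)
          have h11 : 2*((g:ℝ)-1)*T*(x:ℝ) ≤ (g:ℝ)*((d:ℝ)+T) := by
            rw [hgsg]; linarith [h10]
          exact auxX2 (d:ℝ) T ((g:ℝ)-1) ((r:ℝ)-1) (g:ℝ) (x:ℝ) hTsq hGpos hTpos
            (by linarith) h11
    · rw [div_lt_iff₀ (by linarith : (0:ℝ) < (d:ℝ))]
      linarith
    · refine le_min ?_ ?_
      · rw [le_div_iff₀ (by linarith : (0:ℝ) < 2*((r:ℝ)-1))]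
        exact auxYup (d:ℝ) T ((g:ℝ)-1) ((r:ℝ)-1) (x:ℝ) (y:ℝ) hTsq hGpos
          (by linarith) (by linarith)
      · rw [le_div_iff₀ hTpos]
        linarith [hTY1]
  · -- nonpositive case
    have hx0 : x ≤ 0 := by omega
    have hx' : (x:ℝ) ≤ 0 := by exact_mod_cast hx0
    have hyneg : y ≤ -1 := by
      have e1 : (0:ℤ) ≤ 2*(g-1)*(-x) := mul_nonneg (by omega) (by omega)
      exact auxNegY d y hd2 (by linarith [h4, e1])
    have hy' : (y:ℝ) ≤ -1 := by exact_mod_cast hyneg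
    have hS1 : (1:ℝ) ≤ 2*((g:ℝ)-1)*(x:ℝ) - (d:ℝ)*(y:ℝ) := by linarith
    have hTYS2 : -(T*(y:ℝ)) ≤ 2*((g:ℝ)-1)*(x:ℝ) - (d:ℝ)*(y:ℝ) := by
      have h8 : (-(T*(y:ℝ)))^2 ≤ (2*((g:ℝ)-1)*(x:ℝ) - (d:ℝ)*(y:ℝ))^2 := by
        rw [neg_sq]; exact hPS
      exact aux_sqle _ _ h8 (by linarith)
    have hdTY : (d:ℝ)*(y:ℝ) - T*(y:ℝ) ≤ 2*((g:ℝ)-1)*(x:ℝ) := by linarith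
    refine Or.inr ⟨?_, hx', ?_, ?_, ?_, ?_⟩
    · have hkey := auxXlow (d:ℝ) T ((g:ℝ)-1) ((r:ℝ)-1) (x:ℝ) (y:ℝ) (g:ℝ) hTsq hGpos hTpos
        hdTY hTY2 (by linarith) (by linarith)
      have h9 : -(x:ℝ) ≤ 2*((r:ℝ)-1)*(g:ℝ)/(((d:ℝ)+T)*T) := by
        rw [le_div_iff₀ (by positivity)]
        linarith [hkey]
      linarith [h9]
    · refine max_le ?_ ?_
      · rw [neg_le]
        exact (le_div_iff₀ hTpos).mpr (by linarith [hTY2])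
      · exact le_of_lt ((div_lt_iff₀ (by linarith : (0:ℝ) < (d:ℝ))).mpr (by linarith [hB']))
    · rw [le_div_iff₀ (by linarith : (0:ℝ) < 2*((r:ℝ)-1))]
      exact auxYup2 (d:ℝ) T ((g:ℝ)-1) ((r:ℝ)-1) (x:ℝ) (y:ℝ) hTsq hGpos hdTY (by linarith)
    · intro h0
      rw [h0] at hy'
      linarith
    · have hlt : 2*((g:ℝ)-1)*((x:ℝ)-1)/(d:ℝ) < (y:ℝ) :=
        (div_lt_iff₀ (by linarith : (0:ℝ) < (d:ℝ))).mpr (by linarith [hB'])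
      exact ne_of_gt hlt
end

section
/- Let g, r, r' be integers with 1 ≤ r < r' and g ≥ r'(r'+1), and assume it is not the case that r = 1, r' = 2 and g = 8. Then (r'+1−r)·⌈gr'/(r'+1)⌉ < ⌈gr/(r+1)⌉ + g(r'−r). -/
private lemma myfloor (a b : ℤ) (hb : 0 < b) : ⌊(a : ℚ) / (b : ℚ)⌋ = a / b := by
  lift b to ℕ using hb.le
  rw [← Rat.floor_intCast_div_natCast a b]
  norm_cast

private lemma myceil (a b : ℤ) (hb : 0 < b) :
    ⌈((a : ℚ) * b) / ((b : ℚ) + 1)⌉ = a - a / (b + 1) := by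
  have hb1 : ((b : ℚ) + 1) ≠ 0 := by positivity
  have h : ((a : ℚ) * b) / ((b : ℚ) + 1) = -((a : ℚ) / ((b : ℚ) + 1) - a) := by
    field_simp; ring
  rw [h, Int.ceil_neg, Int.floor_sub_intCast]
  have : ((b : ℚ) + 1) = ((b + 1 : ℤ) : ℚ) := by push_cast; ring
  rw [this, myfloor a (b + 1) (by omega)]
  ring

theorem stmt15 (g r r' : ℤ) (hr : 1 ≤ r) (hrr' : r < r') (hg : r' * (r' + 1) ≤ g)
    (hexc : ¬(r = 1 ∧ r' = 2 ∧ g = 8)) :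
    (r' + 1 - r) * ⌈(g * r' : ℚ) / (r' + 1 : ℚ)⌉
      < ⌈(g * r : ℚ) / (r + 1 : ℚ)⌉ + g * (r' - r) := by
  have hr' : (0:ℤ) < r' := by omega
  have hr0 : (0:ℤ) < r := by omega
  have e1 : ⌈(g * r' : ℚ) / (r' + 1 : ℚ)⌉ = g - g / (r' + 1) := by
    have := myceil g r' hr'
    push_cast at this ⊢
    convert this using 2
  have e2 : ⌈(g * r : ℚ) / (r + 1 : ℚ)⌉ = g - g / (r + 1) := by
    have := myceil g r hr0
    push_cast at this ⊢
    convert this using 2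
  rw [e1, e2]
  set q1 := g / (r' + 1) with hq1def
  set q2 := g / (r + 1) with hq2def
  -- reduces to q2 < (r' + 1 - r) * q1
  have key : q2 < (r' + 1 - r) * q1 := by
    have hb1 : (0:ℤ) < r' + 1 := by omega
    have hb2 : (0:ℤ) < r + 1 := by omega
    have hq1lb : r' ≤ q1 := by
      rw [hq1def, Int.le_ediv_iff_mul_le hb1]
      exact hg
    have hub : g < (q1 + 1) * (r' + 1) := Int.lt_ediv_add_one_mul_self g hb1
    have hlb2 : q2 * (r + 1) ≤ g := Int.ediv_mul_le g (by omega)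
    have main : g < (r' + 1 - r) * q1 * (r + 1) := by
      by_cases hc : r = 1 ∧ r' = 2
      · obtain ⟨h1, h2⟩ := hc
        subst h1; subst h2
        have hg8 : g ≠ 8 := by intro h; exact hexc ⟨rfl, rfl, h⟩
        omega
      · have hrr : 2 ≤ r * (r' - r) := by
          rcases lt_or_ge r 2 with h | h
          · have : r = 1 := by omega
            subst this
            have : r' ≠ 2 := fun h => hc ⟨rfl, h⟩
            omega
          · nlinarith [mul_le_mul h (show (1:ℤ) ≤ r' - r by omega) (by omega) (by omega)]
        nlinarith [mul_le_mul_of_nonneg_left hrr (by omega : (0:ℤ) ≤ q1)]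
    nlinarith
  nlinarith
end

section
/- Let g, r, r' be integers with 1 ≤ r' < r and g ≥ r(r+1), and assume it is not the case that r = 2 and g ∈ {6,7,9}. Then, as rational numbers, ⌈r'g/(r'+1)⌉ + r/r' < ⌈rg/(r+1)⌉ + 1; equivalently, r'·⌈r'g/(r'+1)⌉ + r < r'·⌈rg/(r+1)⌉ + r'. -/
theorem stmt16 (g r r' : ℤ) (hr' : 1 ≤ r') (hr'r : r' < r) (hg : r * (r + 1) ≤ g)
    (hexc : ¬(r = 2 ∧ (g = 6 ∨ g = 7 ∨ g = 9))) :
    ((⌈(r' * g : ℚ) / (r' + 1 : ℚ)⌉ : ℚ) + (r : ℚ) / (r' : ℚ)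
        < (⌈(r * g : ℚ) / (r + 1 : ℚ)⌉ : ℚ) + 1) ∧
      r' * ⌈(r' * g : ℚ) / (r' + 1 : ℚ)⌉ + r < r' * ⌈(r * g : ℚ) / (r + 1 : ℚ)⌉ + r' := by
  have hr'Q : (0:ℚ) < (r':ℚ) := by exact_mod_cast hr'
  have hr1 : (0:ℚ) < (r':ℚ) + 1 := by linarith
  have hrQ : (r':ℚ) < (r:ℚ) := by exact_mod_cast hr'r
  have hr2 : (0:ℚ) < (r:ℚ) + 1 := by linarith
  have hA : (⌈(r' * g : ℚ) / (r' + 1 : ℚ)⌉ - 1) * (r' + 1) + 1 ≤ r' * g := by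
    have h := Int.ceil_lt_add_one ((r' * g : ℚ) / (r' + 1 : ℚ))
    have h2 : ((⌈(r' * g : ℚ) / (r' + 1 : ℚ)⌉:ℚ) - 1) < (r' * g : ℚ) / (r' + 1 : ℚ) := by
      linarith
    have h3 := (lt_div_iff₀ hr1).mp h2
    have h4 : ((⌈(r' * g : ℚ) / (r' + 1 : ℚ)⌉ - 1) * (r' + 1) : ℤ) < r' * g := by
      exact_mod_cast h3
    omega
  have hB : r * g ≤ ⌈(r * g : ℚ) / (r + 1 : ℚ)⌉ * (r + 1) := by
    have h := Int.le_ceil ((r * g : ℚ) / (r + 1 : ℚ))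
    have h3 := (div_le_iff₀ hr2).mp h
    exact_mod_cast h3
  have key : r' * ⌈(r' * g : ℚ) / (r' + 1 : ℚ)⌉ + r < r' * ⌈(r * g : ℚ) / (r + 1 : ℚ)⌉ + r' := by
    set A := ⌈(r' * g : ℚ) / (r' + 1 : ℚ)⌉ with hAdef
    set B := ⌈(r * g : ℚ) / (r + 1 : ℚ)⌉ with hBdef
    have hN : g * (r - r') - (r + 1) * r' ≤ (r + 1) * (r' + 1) * (B - A) := by
      nlinarith [mul_le_mul_of_nonneg_left hA (by linarith : (0:ℤ) ≤ r + 1),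
        mul_le_mul_of_nonneg_left hB (by linarith : (0:ℤ) ≤ r' + 1)]
    by_cases hd : r' + 2 ≤ r
    · have hpos : (0:ℤ) ≤ r' * (r - r') := mul_nonneg (by linarith) (by linarith)
      have e1 : (0:ℤ) ≤ (r - r' - 2) * (r' * r') :=
        mul_nonneg (by linarith) (mul_nonneg (by linarith) (by linarith))
      have e2 : (0:ℤ) ≤ (r - r' - 2) * ((r - r') * r') :=
        mul_nonneg (by linarith) (mul_nonneg (by linarith) (by linarith))
      have e3 : (1:ℤ) ≤ r' * r' := by nlinarith
      have e4 : (0:ℤ) ≤ (r - r') * (r' - 1) := mul_nonneg (by linarith) (by linarith)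
      have step1 : (0:ℤ) < (r - r') * (r' * r') + (r - r') * ((r - r') * r')
          - (r - r') - (r - r') * r' - r' * r' := by nlinarith [e1, e2, e3, e4]
      have hgoal : (r - r') * ((r + 1) * (r' + 1)) < r' * (g * (r - r') - (r + 1) * r') := by
        nlinarith [mul_le_mul_of_nonneg_left hg hpos,
          mul_pos (by linarith : (0:ℤ) < r + 1) step1]
      have h5 : ((r + 1) * (r' + 1)) * (r - r') < ((r + 1) * (r' + 1)) * (r' * (B - A)) := by
        nlinarith [mul_le_mul_of_nonneg_left hN (by linarith : (0:ℤ) ≤ r')]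
      have h6 : r - r' < r' * (B - A) :=
        lt_of_mul_lt_mul_left h5 (by nlinarith)
      nlinarith [h6]
    · have hre : r = r' + 1 := by omega
      subst hre
      have hAB : A < B := by
        by_contra hcon
        push_neg at hcon
        have h7 : (r' + 1 + 1) * (r' + 1) * (B - A) ≤ 0 :=
          mul_nonpos_of_nonneg_of_nonpos (by nlinarith) (by linarith)
        nlinarith
      by_cases hr'1 : 2 ≤ r'
      · nlinarith [hAB]
      · have hr'e : r' = 1 := by omega
        subst hr'e
        by_cases hg10 : 10 ≤ g
        · have hAB2 : A + 1 < B := by nlinarith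
          linarith
        · have hg8 : g = 8 := by
            rcases (by omega : g = 6 ∨ g = 7 ∨ g = 8 ∨ g = 9) with h|h|h|h
            · exact absurd ⟨rfl, Or.inl h⟩ hexc
            · exact absurd ⟨rfl, Or.inr (Or.inl h)⟩ hexc
            · exact h
            · exact absurd ⟨rfl, Or.inr (Or.inr h)⟩ hexc
          subst hg8
          have hAv : A = 4 := by
            rw [hAdef]
            norm_num
          have hBv : B = 6 := by
            rw [hBdef]
            rw [show ((((1:ℤ)+1:ℤ)):ℚ) * ((8:ℤ):ℚ) = 16 by norm_num]
            norm_num [Int.ceil_eq_iff]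
          rw [hAv, hBv]; norm_num
  refine ⟨?_, key⟩
  have keyQ : (r':ℚ) * (⌈(r' * g : ℚ) / (r' + 1 : ℚ)⌉:ℚ) + r
      < r' * (⌈(r * g : ℚ) / (r + 1 : ℚ)⌉:ℚ) + r' := by
    exact_mod_cast key
  have h8 : (r:ℚ) < ((⌈(r * g : ℚ) / (r + 1 : ℚ)⌉:ℚ) + 1 - (⌈(r' * g : ℚ) / (r' + 1 : ℚ)⌉:ℚ)) * r' := by
    nlinarith [keyQ]
  have h9 := (div_lt_iff₀ hr'Q).mpr h8
  linarith
end
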